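/- arXiv:2404.00178 — 8 statements merged into one kernel-verified Lean document; each statement's English description precedes it below -/
import Mathlib

section
/- For any two rankings r and r̂ (permutations of {1,...,n}), the square root of twice the squared Euclidean distance between r and r̂ is at most n(n-1) minus twice the number of concordant pairs between r and r̂. That is, √(2·d_E(r,r̂)) ≤ n(n-1) − 2·τ_C(r,r̂). -/
/-- Number of unordered concordant pairs between two rankings. -/
def tauC {n : ℕ} (r rhat : Equiv.Perm (Fin n)) : ℕ :=
  ((Finset.univ : Finset (Fin n × Fin n)).filter fun p =>
    p.1 < p.2 ∧ ((r p.1 < r p.2 ∧ rhat p.1 < rhat p.2) ∨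
                 (r p.2 < r p.1 ∧ rhat p.2 < rhat p.1))).card


open Finset

-- sum-zero lemma
lemma lemA {n : ℕ} (h : Fin n → ℤ) (h0 : ∑ i, h i = 0) :
    2 * ∑ i, (h i)^2 ≤ (∑ i, |h i|)^2 := by
  classical
  set s := (univ : Finset (Fin n)).filter (fun i => 0 ≤ h i) with hs
  set t := (univ : Finset (Fin n)).filter (fun i => ¬ 0 ≤ h i) with ht
  have hdis : Disjoint s t := disjoint_filter_filter_not univ univ _
  have hun : s ∪ t = univ := filter_union_filter_not_eq _ _
  have split : ∀ g : Fin n → ℤ, ∑ i, g i = ∑ i ∈ s, g i + ∑ i ∈ t, g i := by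
    intro g; rw [← sum_union hdis, hun]
  have hP : ∑ i ∈ s, h i = ∑ i ∈ t, (-h i) := by
    have := split h
    rw [h0] at this
    have : ∑ i ∈ s, h i + ∑ i ∈ t, h i = 0 := this.symm
    simp [sum_neg_distrib]
    linarith [this]
  have h1 : ∑ i ∈ s, (h i)^2 ≤ (∑ i ∈ s, h i)^2 :=
    sum_sq_le_sq_sum_of_nonneg (fun i hi => (mem_filter.mp hi).2)
  have h2 : ∑ i ∈ t, (h i)^2 ≤ (∑ i ∈ t, (-h i))^2 := by
    calc ∑ i ∈ t, (h i)^2 = ∑ i ∈ t, (-h i)^2 := by simp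
    _ ≤ (∑ i ∈ t, (-h i))^2 :=
      sum_sq_le_sq_sum_of_nonneg (fun i hi => by
        have := (mem_filter.mp hi).2; linarith)
  have habs : ∑ i, |h i| = ∑ i ∈ s, h i + ∑ i ∈ t, (-h i) := by
    rw [split (fun i => |h i|)]
    congr 1
    · exact sum_congr rfl (fun i hi => abs_of_nonneg (mem_filter.mp hi).2)
    · exact sum_congr rfl (fun i hi => abs_of_neg (by have := (mem_filter.mp hi).2; linarith))
  have hsq := split (fun i => (h i)^2)
  have hP2 : (∑ i ∈ s, h i)^2 = (∑ i ∈ t, (-h i))^2 := by rw [hP]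
  have habs2 : (∑ i, |h i|)^2 = (∑ i ∈ s, h i + ∑ i ∈ t, (-h i))^2 := by rw [habs]
  nlinarith [h1, h2, hP, hP2, habs2, hsq]

lemma card_lt {n : ℕ} (e : Equiv.Perm (Fin n)) (c : Fin n) :
    ((univ : Finset (Fin n)).filter fun j => e j < c).card = (c : ℕ) := by
  classical
  rw [← Fin.card_Iio (b := c)]
  apply card_nbij (i := fun j => e j)
  · intro j hj; simp_all [mem_filter]
  · intro a ha b hb hab; exact e.injective hab
  · intro v hv
    exact ⟨e.symm v, by simp_all [mem_filter], by simp⟩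

lemma lemB1 {n : ℕ} (e f : Equiv.Perm (Fin n)) (i : Fin n) :
    ((f i : ℕ) : ℤ) - ((e i : ℕ) : ℤ)
      ≤ (((univ : Finset (Fin n)).filter fun j => e i < e j ∧ f j < f i).card : ℤ) := by
  classical
  set A := (univ : Finset (Fin n)).filter (fun j => f j < f i) with hA
  have hcA : A.card = (f i : ℕ) := card_lt f (f i)
  have hsplit : A.card = (A.filter (fun j => e i < e j)).card
      + (A.filter (fun j => ¬ e i < e j)).card :=
    (card_filter_add_card_filter_not _).symm
  have h1 : A.filter (fun j => e i < e j)
      = (univ : Finset (Fin n)).filter fun j => e i < e j ∧ f j < f i := by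
    ext j; simp [hA, and_comm]
  have h2 : (A.filter (fun j => ¬ e i < e j)).card ≤ (e i : ℕ) := by
    rw [← card_lt e (e i)]
    apply card_le_card
    intro j hj
    simp only [hA, mem_filter, mem_univ, true_and] at hj ⊢
    rcases hj with ⟨hf, hne⟩
    rcases lt_or_eq_of_le (not_lt.mp hne) with h | h
    · exact h
    · exact absurd ((e.injective h) ▸ hf) (lt_irrefl _)
  have : (f i : ℕ) ≤ ((univ : Finset (Fin n)).filter fun j => e i < e j ∧ f j < f i).card
      + (e i : ℕ) := by
    rw [← hcA, hsplit, h1]; omega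
  omega

section Count

variable {n : ℕ} (r rhat : Equiv.Perm (Fin n))

def Dp : Fin n × Fin n → Prop := fun p =>
  (r p.1 < r p.2 ∧ rhat p.2 < rhat p.1) ∨ (r p.2 < r p.1 ∧ rhat p.1 < rhat p.2)

instance : DecidablePred (Dp r rhat) := fun p => by unfold Dp; infer_instance

lemma sum_Dc :
    ∑ i, ((univ : Finset (Fin n)).filter fun j => Dp r rhat (i, j)).card
      = ((univ : Finset (Fin n × Fin n)).filter (Dp r rhat)).card := by
  rw [card_filter, Fintype.sum_prod_type]
  exact Finset.sum_congr rfl (fun i _ => card_filter _ _)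

lemma Dp_swap (p : Fin n × Fin n) : Dp r rhat p.swap ↔ Dp r rhat p := by
  unfold Dp; simp; tauto

lemma Dp_ne {p : Fin n × Fin n} (h : Dp r rhat p) : p.1 ≠ p.2 := by
  obtain ⟨a, b⟩ := p
  intro hab
  simp only at hab
  subst hab
  unfold Dp at h
  rcases h with ⟨h1, _⟩ | ⟨h1, _⟩ <;> exact absurd h1 (lt_irrefl _)

lemma double :
    ((univ : Finset (Fin n × Fin n)).filter (Dp r rhat)).card
      = 2 * ((univ : Finset (Fin n × Fin n)).filter
          (fun p => p.1 < p.2 ∧ Dp r rhat p)).card := by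
  classical
  have hpart : (univ : Finset (Fin n × Fin n)).filter (Dp r rhat)
      = ((univ : Finset (Fin n × Fin n)).filter (fun p => p.1 < p.2 ∧ Dp r rhat p))
        ∪ ((univ : Finset (Fin n × Fin n)).filter (fun p => p.2 < p.1 ∧ Dp r rhat p)) := by
    ext p
    simp only [mem_filter, mem_union, mem_univ, true_and]
    constructor
    · intro h
      rcases lt_trichotomy p.1 p.2 with h1 | h1 | h1
      · exact Or.inl ⟨h1, h⟩
      · exact absurd h1 (Dp_ne r rhat h)
      · exact Or.inr ⟨h1, h⟩
    · rintro (⟨_, h⟩ | ⟨_, h⟩) <;> exact h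
  have hdisj : Disjoint
      ((univ : Finset (Fin n × Fin n)).filter (fun p => p.1 < p.2 ∧ Dp r rhat p))
      ((univ : Finset (Fin n × Fin n)).filter (fun p => p.2 < p.1 ∧ Dp r rhat p)) := by
    rw [disjoint_filter]
    rintro p _ ⟨h1, _⟩ ⟨h2, _⟩
    exact absurd (h1.trans h2) (lt_irrefl _)
  have hswap : ((univ : Finset (Fin n × Fin n)).filter (fun p => p.2 < p.1 ∧ Dp r rhat p)).card
      = ((univ : Finset (Fin n × Fin n)).filter (fun p => p.1 < p.2 ∧ Dp r rhat p)).card := by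
    apply card_nbij (i := Prod.swap)
    · intro p hp
      simp only [Finset.mem_coe, mem_filter, mem_univ, true_and] at hp ⊢
      exact ⟨hp.1, (Dp_swap r rhat p).mpr hp.2⟩
    · intro a _ b _ hab; exact Prod.swap_injective hab
    · intro p hp
      refine ⟨p.swap, ?_, Prod.swap_swap p⟩
      simp only [Finset.mem_coe, mem_filter, mem_univ, true_and] at hp ⊢
      exact ⟨hp.1, (Dp_swap r rhat p).mpr hp.2⟩
  rw [hpart, card_union_of_disjoint hdisj, hswap]
  ring

lemma count_all : 2 * (tauC r rhat
      + ((univ : Finset (Fin n × Fin n)).filter (fun p => p.1 < p.2 ∧ Dp r rhat p)).card)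
    = n * (n - 1) := by
  classical
  have hsum : tauC r rhat
      + ((univ : Finset (Fin n × Fin n)).filter (fun p => p.1 < p.2 ∧ Dp r rhat p)).card
      = ((univ : Finset (Fin n × Fin n)).filter (fun p => p.1 < p.2)).card := by
    unfold tauC
    rw [← card_union_of_disjoint]
    · congr 1
      ext p
      simp only [mem_filter, mem_union, mem_univ, true_and]
      constructor
      · rintro (⟨h1, h⟩ | ⟨h1, h⟩) <;> exact h1
      · intro h1
        have hne1 : r p.1 ≠ r p.2 := fun he => absurd (r.injective he) (ne_of_lt h1)
        have hne2 : rhat p.1 ≠ rhat p.2 := fun he => absurd (rhat.injective he) (ne_of_lt h1)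
        rcases lt_or_gt_of_ne hne1 with h2 | h2 <;> rcases lt_or_gt_of_ne hne2 with h3 | h3
        · exact Or.inl ⟨h1, Or.inl ⟨h2, h3⟩⟩
        · exact Or.inr ⟨h1, Or.inl ⟨h2, h3⟩⟩
        · exact Or.inr ⟨h1, Or.inr ⟨h2, h3⟩⟩
        · exact Or.inl ⟨h1, Or.inr ⟨h2, h3⟩⟩
    · rw [disjoint_filter]
      rintro p _ ⟨h1, hc⟩ ⟨_, hd⟩
      unfold Dp at hd
      rcases hc with ⟨a, b⟩ | ⟨a, b⟩ <;> rcases hd with ⟨c, d⟩ | ⟨c, d⟩ <;>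
        first
        | exact absurd d (lt_asymm b)
        | exact absurd c (lt_asymm a)
  rw [hsum]
  have hL : ((univ : Finset (Fin n × Fin n)).filter (fun p => p.1 < p.2)).card
      = ∑ j : Fin n, (j : ℕ) := by
    rw [card_filter, Fintype.sum_prod_type, Finset.sum_comm]
    congr 1
    ext j
    rw [← card_filter]
    convert card_lt (Equiv.refl (Fin n)) j using 3 with x _
    exact Iff.rfl
  rw [hL, Fin.sum_univ_eq_sum_range (fun k => k) n, mul_comm,
    Finset.sum_range_id_mul_two]

end Count


/-- √(2·d_E(r,r̂)) ≤ n(n−1) − 2·τ_C(r,r̂). -/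
theorem stmt0 (n : ℕ) (r rhat : Equiv.Perm (Fin n)) :
    Real.sqrt (2 * ∑ i, (((r i : ℕ) : ℝ) - ((rhat i : ℕ) : ℝ)) ^ 2)
      ≤ (n : ℝ) * ((n : ℝ) - 1) - 2 * (tauC r rhat : ℝ) := by
  classical
  set d : Fin n → ℤ := fun i => ((r i : ℕ) : ℤ) - ((rhat i : ℕ) : ℤ) with hd
  set K : ℕ := ((univ : Finset (Fin n × Fin n)).filter
      (fun p => p.1 < p.2 ∧ Dp r rhat p)).card with hK
  have h0 : ∑ i, d i = 0 := by
    have h1 : ∑ i, ((r i : ℕ) : ℤ) = ∑ i : Fin n, ((i : ℕ) : ℤ) :=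
      Equiv.sum_comp r (fun j => ((j : ℕ) : ℤ))
    have h2 : ∑ i, ((rhat i : ℕ) : ℤ) = ∑ i : Fin n, ((i : ℕ) : ℤ) :=
      Equiv.sum_comp rhat (fun j => ((j : ℕ) : ℤ))
    simp only [hd, Finset.sum_sub_distrib, h1, h2, sub_self]
  have hB : ∀ i, |d i| ≤ (((univ : Finset (Fin n)).filter
      fun j => Dp r rhat (i, j)).card : ℤ) := by
    intro i
    rw [abs_le]
    constructor
    · have h1 := lemB1 r rhat i
      have hsub : ((univ : Finset (Fin n)).filter fun j => r i < r j ∧ rhat j < rhat i)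
          ⊆ (univ : Finset (Fin n)).filter fun j => Dp r rhat (i, j) := by
        intro j hj
        simp only [mem_filter, mem_univ, true_and] at hj ⊢
        exact Or.inl hj
      have h2 := (Nat.cast_le (α := ℤ)).mpr (card_le_card hsub)
      simp only [hd]
      linarith
    · have h1 := lemB1 rhat r i
      have hsub : ((univ : Finset (Fin n)).filter fun j => rhat i < rhat j ∧ r j < r i)
          ⊆ (univ : Finset (Fin n)).filter fun j => Dp r rhat (i, j) := by
        intro j hj
        simp only [mem_filter, mem_univ, true_and] at hj ⊢
        exact Or.inr ⟨hj.2, hj.1⟩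
      have h2 := (Nat.cast_le (α := ℤ)).mpr (card_le_card hsub)
      simp only [hd]
      linarith
  have hsum : ∑ i, |d i| ≤ (2 * K : ℤ) := by
    calc ∑ i, |d i|
        ≤ ∑ i, (((univ : Finset (Fin n)).filter fun j => Dp r rhat (i, j)).card : ℤ) :=
          Finset.sum_le_sum (fun i _ => hB i)
      _ = (2 * K : ℤ) := by
          rw [← Nat.cast_sum]
          rw [sum_Dc r rhat, double r rhat]
          push_cast
          ring
  have habs : (0:ℤ) ≤ ∑ i, |d i| := Finset.sum_nonneg (fun i _ => abs_nonneg _)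
  have hmain : 2 * ∑ i, (d i)^2 ≤ ((2 * K : ℤ))^2 := by
    calc 2 * ∑ i, (d i)^2 ≤ (∑ i, |d i|)^2 := lemA d h0
      _ ≤ ((2 * K : ℤ))^2 := by nlinarith [hsum, habs]
  -- pass to ℝ
  have hcast : (2 * ∑ i, (((r i : ℕ) : ℝ) - ((rhat i : ℕ) : ℝ)) ^ 2)
      = ((2 * ∑ i, (d i)^2 : ℤ) : ℝ) := by
    push_cast [hd]
    ring
  have hsqrt : Real.sqrt (2 * ∑ i, (((r i : ℕ) : ℝ) - ((rhat i : ℕ) : ℝ)) ^ 2)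
      ≤ (2 * K : ℝ) := by
    rw [hcast]
    have hle : ((2 * ∑ i, (d i)^2 : ℤ) : ℝ) ≤ (2 * (K:ℝ))^2 := by
      have : ((2 * ∑ i, (d i)^2 : ℤ) : ℝ) ≤ (((2 * (K:ℤ))^2 : ℤ) : ℝ) := by
        exact_mod_cast hmain
      refine this.trans_eq ?_
      push_cast
      ring
    calc Real.sqrt ((2 * ∑ i, (d i)^2 : ℤ) : ℝ)
        ≤ Real.sqrt ((2 * (K:ℝ))^2) := Real.sqrt_le_sqrt hle
      _ = 2 * (K:ℝ) := Real.sqrt_sq (by positivity)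
  refine hsqrt.trans ?_
  have hcount := count_all r rhat
  have : ((n * (n - 1) : ℕ) : ℝ) = (n : ℝ) * ((n : ℝ) - 1) := by
    rcases n with _ | m
    · simp
    · push_cast [Nat.succ_sub_one]
      ring
  rw [← this, ← hcount, hK]
  push_cast
  ring_nf
  rfl
end

section
/- For any two rankings r and r̂ of n teams, the squared Manhattan distance between them is at least twice the squared Euclidean distance: (Σ_i |r_i − r̂_i|)² ≥ 2 Σ_i (r_i − r̂_i)². -/
/-- Squared Manhattan distance between two rankings is at least twice the squared
Euclidean distance. -/
theorem stmt1 (n : ℕ) (r rhat : Equiv.Perm (Fin n)) :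
    2 * ∑ i, (((r i : ℕ) : ℤ) - ((rhat i : ℕ) : ℤ)) ^ 2
      ≤ (∑ i, |((r i : ℕ) : ℤ) - ((rhat i : ℕ) : ℤ)|) ^ 2 := by
  set f : Fin n → ℤ := fun i => ((r i : ℕ) : ℤ) - ((rhat i : ℕ) : ℤ) with hf
  have hsum : ∑ i, f i = 0 := by
    simp only [hf, Finset.sum_sub_distrib]
    rw [Equiv.sum_comp r (fun i : Fin n => ((i : ℕ) : ℤ)),
      Equiv.sum_comp rhat (fun i : Fin n => ((i : ℕ) : ℤ)), sub_self]
  set s : Finset (Fin n) := Finset.univ.filter (fun i => 0 ≤ f i) with hs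
  set P : ℤ := ∑ i ∈ s, f i with hP
  set N : ℤ := ∑ i ∈ sᶜ, (-f i) with hN
  have hsplit : P + ∑ i ∈ sᶜ, f i = 0 := by
    rw [hP, Finset.sum_add_sum_compl]; exact hsum
  have hPN : N = P := by
    rw [hN, Finset.sum_neg_distrib]; linarith
  have hPnn : 0 ≤ P :=
    Finset.sum_nonneg fun i hi => (Finset.mem_filter.mp hi).2
  have habs : ∑ i, |f i| = P + N := by
    rw [← Finset.sum_add_sum_compl s]
    congr 1
    · exact Finset.sum_congr rfl fun i hi => abs_of_nonneg (Finset.mem_filter.mp hi).2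
    · exact Finset.sum_congr rfl fun i hi => abs_of_neg (by
        have := Finset.mem_compl.mp hi
        simp only [hs, Finset.mem_filter, Finset.mem_univ, true_and] at this
        omega)
  have hsq : ∑ i, (f i) ^ 2 = ∑ i ∈ s, (f i) ^ 2 + ∑ i ∈ sᶜ, (-f i) ^ 2 := by
    rw [← Finset.sum_add_sum_compl s]
    simp
  have h1 : ∑ i ∈ s, (f i) ^ 2 ≤ P ^ 2 :=
    Finset.sum_sq_le_sq_sum_of_nonneg fun i hi => (Finset.mem_filter.mp hi).2
  have h2 : ∑ i ∈ sᶜ, (-f i) ^ 2 ≤ N ^ 2 :=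
    Finset.sum_sq_le_sq_sum_of_nonneg fun i hi => by
      have := Finset.mem_compl.mp hi
      simp only [hs, Finset.mem_filter, Finset.mem_univ, true_and] at this
      omega
  rw [habs, hsq]
  nlinarith [hPN, hPnn]
end

section
/- For any two rankings r and r̂ of n teams, the Manhattan distance satisfies Σ_i |r_i − r̂_i| ≤ n(n−1) − 2·τ_C(r,r̂), where τ_C(r,r̂) is the number of concordant pairs. -/
open Finset

private lemma card_lt_val {n : ℕ} (m : Fin n) :
    (univ.filter fun k : Fin n => k < m).card = m := by
  have : (univ.filter fun k : Fin n => k < m) = Finset.Iio m := by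
    ext k; simp [Finset.mem_Iio]
  rw [this, Fin.card_Iio]

private lemma card_filter_perm {n : ℕ} (e : Equiv.Perm (Fin n)) (p : Fin n → Prop)
    [DecidablePred p] :
    (univ.filter fun j => p (e j)).card = (univ.filter p).card := by
  apply Finset.card_nbij' (fun j => e j) (fun j => e.symm j) <;> simp [Set.MapsTo, Set.LeftInvOn, Set.RightInvOn]

/-- Manhattan distance bound: Σ|rᵢ−r̂ᵢ| ≤ n(n−1) − 2τ_C. -/
theorem stmt3 (n : ℕ) (r rhat : Equiv.Perm (Fin n)) :
    ∑ i, |((r i : ℕ) : ℤ) - ((rhat i : ℕ) : ℤ)|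
      ≤ (n : ℤ) * ((n : ℤ) - 1) - 2 * (tauC r rhat : ℤ) := by
  classical
  -- discordance predicate (on ordered pairs)
  set disc : Fin n → Fin n → Prop := fun i j =>
    (r i < r j ∧ rhat j < rhat i) ∨ (r j < r i ∧ rhat i < rhat j) with hdisc
  set conc : Fin n → Fin n → Prop := fun i j =>
    (r i < r j ∧ rhat i < rhat j) ∨ (r j < r i ∧ rhat j < rhat i) with hconc
  set D : Finset (Fin n × Fin n) := univ.filter fun p => disc p.1 p.2 with hD
  -- Step 1: pointwise bound
  have step1 : ∀ i : Fin n, |((r i : ℕ) : ℤ) - ((rhat i : ℕ) : ℤ)|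
      ≤ ((univ.filter fun j => disc i j).card : ℤ) := by
    intro i
    set A : Finset (Fin n) := univ.filter fun j => r j < r i with hA
    set B : Finset (Fin n) := univ.filter fun j => rhat j < rhat i with hB
    have hAc : A.card = (r i : ℕ) := by
      rw [hA, card_filter_perm r (fun k => k < r i), card_lt_val]
    have hBc : B.card = (rhat i : ℕ) := by
      rw [hB, card_filter_perm rhat (fun k => k < rhat i), card_lt_val]
    have hsub1 : A \ B ⊆ univ.filter fun j => disc i j := by
      intro j hj
      simp only [hA, hB, mem_sdiff, mem_filter, mem_univ, true_and, not_lt] at hj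
      obtain ⟨h1, h2⟩ := hj
      have hne : j ≠ i := fun h => absurd (h ▸ h1) (lt_irrefl _)
      have : rhat i < rhat j := lt_of_le_of_ne h2 (by
        intro h; exact hne (rhat.injective h.symm))
      simp only [mem_filter, mem_univ, true_and, hdisc]
      exact Or.inr ⟨h1, this⟩
    have hsub2 : B \ A ⊆ univ.filter fun j => disc i j := by
      intro j hj
      simp only [hA, hB, mem_sdiff, mem_filter, mem_univ, true_and, not_lt] at hj
      obtain ⟨h1, h2⟩ := hj
      have hne : j ≠ i := fun h => absurd (h ▸ h1) (lt_irrefl _)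
      have : r i < r j := lt_of_le_of_ne h2 (by
        intro h; exact hne (r.injective h.symm))
      simp only [mem_filter, mem_univ, true_and, hdisc]
      exact Or.inl ⟨this, h1⟩
    rw [abs_sub_le_iff]
    constructor
    · rw [← hAc, ← hBc]
      have h1 : A.card ≤ (A \ B).card + B.card := Finset.card_le_card_sdiff_add_card
      have h2 : (A \ B).card ≤ (univ.filter fun j => disc i j).card :=
        Finset.card_le_card hsub1
      omega
    · rw [← hAc, ← hBc]
      have h1 : B.card ≤ (B \ A).card + A.card := Finset.card_le_card_sdiff_add_card
      have h2 : (B \ A).card ≤ (univ.filter fun j => disc i j).card :=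
        Finset.card_le_card hsub2
      omega
  -- Step 2: sum of pointwise counts = D.card
  have step2 : ∑ i : Fin n, (univ.filter fun j => disc i j).card = D.card := by
    rw [hD, Finset.card_filter, Fintype.sum_prod_type]
    exact Finset.sum_congr rfl fun i _ => Finset.card_filter _ _
  -- Step 3: counting: D.card + 2 * tauC r rhat = n * n - n
  have step3 : D.card + 2 * tauC r rhat = n * n - n := by
    -- pairs with distinct coordinates
    have hne_iff : ∀ p : Fin n × Fin n, p.1 ≠ p.2 ↔ (conc p.1 p.2 ∨ disc p.1 p.2) := by
      intro p
      constructor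
      · intro h
        have hr : r p.1 ≠ r p.2 := fun hh => h (r.injective hh)
        have hrh : rhat p.1 ≠ rhat p.2 := fun hh => h (rhat.injective hh)
        rcases lt_or_gt_of_ne hr with h1 | h1 <;> rcases lt_or_gt_of_ne hrh with h2 | h2
        · exact Or.inl (Or.inl ⟨h1, h2⟩)
        · exact Or.inr (Or.inl ⟨h1, h2⟩)
        · exact Or.inr (Or.inr ⟨h1, h2⟩)
        · exact Or.inl (Or.inr ⟨h1, h2⟩)
      · rintro (h | h) <;> rcases h with ⟨h1, _⟩ | ⟨h1, _⟩ <;>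
          exact fun hh => absurd (hh ▸ h1) (lt_irrefl _)
    have hsplit : (univ.filter fun p : Fin n × Fin n => p.1 ≠ p.2)
        = (univ.filter fun p => conc p.1 p.2) ∪ D := by
      rw [hD, ← Finset.filter_or]
      exact Finset.filter_congr fun p _ => by rw [hne_iff]
    have hdisj : Disjoint (univ.filter fun p : Fin n × Fin n => conc p.1 p.2) D := by
      rw [Finset.disjoint_left]
      intro p hp hq
      simp only [mem_filter, mem_univ, true_and, hconc, hD, hdisc] at hp hq
      rcases hp with hc | hc <;> rcases hq with hd | hd
      · exact absurd hd.2 (not_lt.mpr (le_of_lt hc.2))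
      · exact absurd hd.1 (not_lt.mpr (le_of_lt hc.1))
      · exact absurd hd.1 (not_lt.mpr (le_of_lt hc.1))
      · exact absurd hd.2 (not_lt.mpr (le_of_lt hc.2))

    have hcard_ne : (univ.filter fun p : Fin n × Fin n => p.1 ≠ p.2).card = n * n - n := by
      have := Finset.offDiag_card (univ : Finset (Fin n))
      rw [Finset.card_univ, Fintype.card_fin] at this
      rw [← this]
      congr 1
      ext p; simp [Finset.mem_offDiag]
    -- concordant ordered pairs = 2 * tauC
    have hconc2 : (univ.filter fun p : Fin n × Fin n => conc p.1 p.2).card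
        = 2 * tauC r rhat := by
      have hsplit2 : (univ.filter fun p : Fin n × Fin n => conc p.1 p.2)
          = (univ.filter fun p : Fin n × Fin n => p.1 < p.2 ∧ conc p.1 p.2)
            ∪ (univ.filter fun p : Fin n × Fin n => p.2 < p.1 ∧ conc p.1 p.2) := by
        rw [← Finset.filter_or]
        apply Finset.filter_congr
        intro p _
        constructor
        · intro h
          have hne : p.1 ≠ p.2 := (hne_iff p).mpr (Or.inl h)
          rcases lt_or_gt_of_ne hne with h1 | h1
          · exact Or.inl ⟨h1, h⟩
          · exact Or.inr ⟨h1, h⟩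
        · rintro (⟨_, h⟩ | ⟨_, h⟩) <;> exact h
      have hdisj2 : Disjoint
          (univ.filter fun p : Fin n × Fin n => p.1 < p.2 ∧ conc p.1 p.2)
          (univ.filter fun p : Fin n × Fin n => p.2 < p.1 ∧ conc p.1 p.2) := by
        rw [Finset.disjoint_left]
        intro p hp hq
        simp only [mem_filter, mem_univ, true_and] at hp hq
        exact absurd hq.1 (not_lt.mpr (le_of_lt hp.1))
      have hswap : (univ.filter fun p : Fin n × Fin n => p.2 < p.1 ∧ conc p.1 p.2).card
          = (univ.filter fun p : Fin n × Fin n => p.1 < p.2 ∧ conc p.1 p.2).card := by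
        apply Finset.card_nbij' (fun p => p.swap) (fun p => p.swap)
        · intro p hp
          simp only [Finset.mem_coe, mem_filter, mem_univ, true_and, hconc, Prod.fst_swap,
            Prod.snd_swap] at hp ⊢
          exact ⟨hp.1, hp.2.symm⟩
        · intro p hp
          simp only [Finset.mem_coe, mem_filter, mem_univ, true_and, hconc, Prod.fst_swap,
            Prod.snd_swap] at hp ⊢
          exact ⟨hp.1, hp.2.symm⟩
        · intro p _; exact Prod.swap_swap p
        · intro p _; exact Prod.swap_swap p
      have htau : (univ.filter fun p : Fin n × Fin n => p.1 < p.2 ∧ conc p.1 p.2).card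
          = tauC r rhat := by
        rw [tauC]
      rw [hsplit2, Finset.card_union_of_disjoint hdisj2, hswap, htau]
      ring
    rw [hsplit, Finset.card_union_of_disjoint hdisj, hconc2] at hcard_ne
    omega
  calc ∑ i, |((r i : ℕ) : ℤ) - ((rhat i : ℕ) : ℤ)|
      ≤ ∑ i : Fin n, ((univ.filter fun j => disc i j).card : ℤ) :=
        Finset.sum_le_sum fun i _ => step1 i
    _ = (D.card : ℤ) := by rw [← Nat.cast_sum, step2]
    _ ≤ (n : ℤ) * ((n : ℤ) - 1) - 2 * (tauC r rhat : ℤ) := by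
        have hnn : n ≤ n * n := by nlinarith
        have hcast : (D.card : ℤ) + 2 * (tauC r rhat : ℤ) = (n : ℤ) * n - n := by
          have h1 : D.card + 2 * tauC r rhat + n = n * n := by omega
          have h2 := congrArg (fun k : ℕ => (k : ℤ)) h1
          push_cast at h2
          linarith
        have h3 : (n : ℤ) * ((n : ℤ) - 1) = (n : ℤ) * (n : ℤ) - n := by ring
        linarith
end

section
/- The maximum of Σ_{i=1}^n (p_i − q_i)² over all pairs of permutations p, q of {1,...,n} equals n(n²−1)/3, and this maximum is achieved by taking q to be the reversal of p. -/
/-!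
Writing `σ = p⁻¹ q`, the sum equals `∑ⱼ (j - σ j)²`. Since `σ` permutes the values, the squares
contribute `2 ∑ⱼ j²` whatever `σ` is, so maximising the sum means minimising `∑ⱼ j · σ j`. By the
rearrangement inequality that happens when `σ` is antitone, i.e. the reversal `j ↦ n - 1 - j`, and
then `∑ⱼ (2j + 1 - n)² = n(n² - 1)/3`.
-/

open Finset

section Rearrangement

variable {ι R : Type*} [Fintype ι] [CommRing R]

theorem sum_sub_comp_perm_sq (f : ι → R) (σ : Equiv.Perm ι) :
    ∑ i, (f i - f (σ i)) ^ 2 = 2 * ∑ i, f i ^ 2 - 2 * ∑ i, f i * f (σ i) := by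
  have hσ : ∑ i, f (σ i) ^ 2 = ∑ i, f i ^ 2 := Equiv.sum_comp σ (fun i => f i ^ 2)
  simp only [sub_sq, mul_assoc, sum_add_distrib, sum_sub_distrib, hσ, ← mul_sum]
  ring

theorem sum_sub_comp_perm_sq_le_of_antivary [LinearOrder R] [IsStrictOrderedRing R] (f : ι → R)
    (σ ρ : Equiv.Perm ι) (hρ : Antivary f (f ∘ ρ)) :
    ∑ i, (f i - f (σ i)) ^ 2 ≤ ∑ i, (f i - f (ρ i)) ^ 2 := by
  have hmul : ∑ i, f i * f (ρ i) ≤ ∑ i, f i * f (σ i) := by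
    simpa using hρ.sum_mul_le_sum_mul_comp_perm (σ := σ.trans ρ.symm)
  rw [sum_sub_comp_perm_sq, sum_sub_comp_perm_sq]
  linarith

end Rearrangement

theorem sum_range_two_mul_add_sq (n : ℕ) (c : ℚ) :
    ∑ i ∈ range n, (2 * (i : ℚ) + c) ^ 2
      = 2 * n * (n - 1) * (2 * n - 1) / 3 + 2 * c * n * (n - 1) + n * c ^ 2 := by
  induction n with
  | zero => simp
  | succ k ih => rw [sum_range_succ, ih]; push_cast; ring

theorem Fin.cast_val_rev {R : Type*} [AddGroupWithOne R] {n : ℕ} (i : Fin n) :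
    ((i.rev : ℕ) : R) = n - 1 - i := by
  rw [Fin.val_rev, Nat.cast_sub i.isLt, Nat.cast_succ, sub_add_eq_sub_sub_swap]

theorem Fin.sum_val_sub_rev_sq (n : ℕ) :
    ∑ i : Fin n, (((i : ℕ) : ℚ) - ((i.rev : ℕ) : ℚ)) ^ 2 = n * ((n : ℚ) ^ 2 - 1) / 3 := by
  have h : ∀ i : Fin n, (((i : ℕ) : ℚ) - ((i.rev : ℕ) : ℚ)) ^ 2 = (2 * (i : ℚ) + (1 - n)) ^ 2 :=
    fun i => by rw [Fin.cast_val_rev]; ring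
  rw [Fintype.sum_congr _ _ h, Fin.sum_univ_eq_sum_range (fun i => (2 * (i : ℚ) + (1 - n)) ^ 2),
    sum_range_two_mul_add_sq]
  ring

theorem Fin.antivary_val_val_rev {R : Type*} [AddMonoidWithOne R] [PartialOrder R] [AddLeftMono R]
    [ZeroLEOneClass R] (n : ℕ) :
    Antivary (fun i : Fin n => ((i : ℕ) : R)) (fun i => ((i.rev : ℕ) : R)) :=
  (Nat.mono_cast.comp Fin.val_strictMono.monotone).antivary
    ((Nat.mono_cast.comp Fin.val_strictMono.monotone).comp_antitone Fin.rev_anti)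

/-- The maximum of Σᵢ (pᵢ − qᵢ)² over pairs of permutations of {1,…,n} is n(n²−1)/3,
achieved when q is the reversal of p. -/
theorem stmt6 (n : ℕ) :
    IsGreatest {s : ℚ | ∃ p q : Equiv.Perm (Fin n),
        s = ∑ i, (((p i : ℕ) : ℚ) - ((q i : ℕ) : ℚ)) ^ 2}
      ((n : ℚ) * ((n : ℚ) ^ 2 - 1) / 3)
    ∧ ∀ p : Equiv.Perm (Fin n),
        ∑ i, (((p i : ℕ) : ℚ) - (((p.trans Fin.revPerm) i : ℕ) : ℚ)) ^ 2
          = (n : ℚ) * ((n : ℚ) ^ 2 - 1) / 3 := by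
  set f : Fin n → ℚ := fun i => ((i : ℕ) : ℚ)
  have hrev : ∀ p : Equiv.Perm (Fin n),
      ∑ i, (f (p i) - f (p i).rev) ^ 2 = n * ((n : ℚ) ^ 2 - 1) / 3 :=
    fun p => (Equiv.sum_comp p fun j => (f j - f j.rev) ^ 2).trans (Fin.sum_val_sub_rev_sq n)
  refine ⟨⟨⟨1, Fin.revPerm, (hrev 1).symm⟩, ?_⟩, hrev⟩
  rintro s ⟨p, q, rfl⟩
  calc ∑ i, (f (p i) - f (q i)) ^ 2
      = ∑ j, (f j - f ((p.symm.trans q) j)) ^ 2 := by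
        rw [← Equiv.sum_comp p fun j => (f j - f ((p.symm.trans q) j)) ^ 2]
        simp
    _ ≤ ∑ j, (f j - f (Fin.revPerm j)) ^ 2 :=
        sum_sub_comp_perm_sq_le_of_antivary f _ _ (Fin.antivary_val_val_rev n)
    _ = n * ((n : ℚ) ^ 2 - 1) / 3 := Fin.sum_val_sub_rev_sq n
end

section
/- For every pair of permutations p, q of {1,...,n}, Σ_{i=1}^n (p_i − q_i)² ≤ n(n²−1)/3. -/
lemma sumS1 (n : ℕ) : ∑ j : Fin n, ((j : ℕ) : ℚ) = n * (n - 1) / 2 := by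
  rw [Fin.sum_univ_eq_sum_range]
  induction n with
  | zero => simp
  | succ m ih =>
    rw [Finset.sum_range_succ, ih]
    push_cast
    ring

lemma sumS2 (n : ℕ) : ∑ j : Fin n, ((j : ℕ) : ℚ) ^ 2 = n * (n - 1) * (2 * n - 1) / 6 := by
  rw [Fin.sum_univ_eq_sum_range (fun i : ℕ => (i : ℚ) ^ 2) n]
  induction n with
  | zero => simp
  | succ m ih =>
    rw [Finset.sum_range_succ, ih]
    push_cast
    ring

lemma key (n : ℕ) (σ : Equiv.Perm (Fin n)) :
    ∑ j : Fin n, ((j : ℕ) : ℚ) * ((σ j : ℕ) : ℚ) ≤ ∑ j : Fin n, ((j : ℕ) : ℚ) ^ 2 := by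
  have h := (monovary_self (fun j : Fin n => ((j : ℕ) : ℚ))).sum_mul_comp_perm_le_sum_mul (σ := σ)
  simpa [sq] using h

/-- For every pair of permutations of {1,…,n}, Σᵢ (pᵢ − qᵢ)² ≤ n(n²−1)/3. -/
theorem stmt8 (n : ℕ) (p q : Equiv.Perm (Fin n)) :
    ∑ i, (((p i : ℕ) : ℚ) - ((q i : ℕ) : ℚ)) ^ 2
      ≤ (n : ℚ) * ((n : ℚ) ^ 2 - 1) / 3 := by
  set σ : Equiv.Perm (Fin n) := p.symm.trans q with hσ
  have hre : ∑ i, (((p i : ℕ) : ℚ) - ((q i : ℕ) : ℚ)) ^ 2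
      = ∑ j : Fin n, (((j : ℕ) : ℚ) - ((σ j : ℕ) : ℚ)) ^ 2 := by
    rw [← Equiv.sum_comp p (fun j => (((j : ℕ) : ℚ) - ((σ j : ℕ) : ℚ)) ^ 2)]
    simp [hσ]
  rw [hre]
  -- expand
  have hexp : ∑ j : Fin n, (((j : ℕ) : ℚ) - ((σ j : ℕ) : ℚ)) ^ 2
      = 2 * (∑ j : Fin n, ((j : ℕ) : ℚ) ^ 2) - 2 * ∑ j : Fin n, ((j : ℕ) : ℚ) * ((σ j : ℕ) : ℚ) := by
    have h2 : ∑ j : Fin n, ((σ j : ℕ) : ℚ) ^ 2 = ∑ j : Fin n, ((j : ℕ) : ℚ) ^ 2 :=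
      Equiv.sum_comp σ (fun j => ((j : ℕ) : ℚ) ^ 2)
    calc ∑ j : Fin n, (((j : ℕ) : ℚ) - ((σ j : ℕ) : ℚ)) ^ 2
        = ∑ j : Fin n, (((j : ℕ) : ℚ) ^ 2 + ((σ j : ℕ) : ℚ) ^ 2
            - 2 * (((j : ℕ) : ℚ) * ((σ j : ℕ) : ℚ))) := by
          apply Finset.sum_congr rfl; intro j _; ring
      _ = _ := by
          rw [Finset.sum_sub_distrib, Finset.sum_add_distrib, h2, ← Finset.mul_sum]
          ring
  rw [hexp]
  -- lower bound for the cross term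
  have hτ : ∑ j : Fin n, ((j : ℕ) : ℚ) * ((σ j : ℕ) : ℚ)
      ≥ ((n : ℚ) - 1) * (∑ j : Fin n, ((j : ℕ) : ℚ)) - ∑ j : Fin n, ((j : ℕ) : ℚ) ^ 2 := by
    set τ : Equiv.Perm (Fin n) := σ.trans (Fin.revPerm) with hτdef
    have hval : ∀ j : Fin n, ((σ j : ℕ) : ℚ) = ((n : ℚ) - 1) - ((τ j : ℕ) : ℚ) := by
      intro j
      have : (τ j : ℕ) = n - ((σ j : ℕ) + 1) := by
        simp [hτdef, Fin.val_rev]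
      rw [this]
      have hlt : (σ j : ℕ) + 1 ≤ n := (σ j).is_lt
      push_cast [Nat.cast_sub hlt]
      ring
    have hsum : ∑ j : Fin n, ((j : ℕ) : ℚ) * ((σ j : ℕ) : ℚ)
        = ((n : ℚ) - 1) * (∑ j : Fin n, ((j : ℕ) : ℚ))
          - ∑ j : Fin n, ((j : ℕ) : ℚ) * ((τ j : ℕ) : ℚ) := by
      rw [Finset.mul_sum, ← Finset.sum_sub_distrib]
      apply Finset.sum_congr rfl; intro j _
      rw [hval j]; ring
    rw [hsum]
    have := key n τ
    linarith
  have hS1 := sumS1 n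
  have hS2 := sumS2 n
  have hn : (0 : ℚ) ≤ (n : ℚ) := Nat.cast_nonneg n
  nlinarith [hτ, hS1, hS2]
end

section
/- Let m, m̂ be positive integers and L = lcm(m, m̂). There exists a constant D ≤ n(n²−1)L²/3 such that for all feasible schedules x and all outcome realizations ξ, the squared Euclidean distance between the shortened-season ranking r(x,ξ) and the full-season ranking r̂(ξ) is at most D times Σ_i (y_i(x,ξ) − ŷ_i(ξ))², the squared Euclidean distance between the shortened- and full-season win-percentage vectors. -/
private lemma sum_range_cast (n : ℕ) :
    ∑ i ∈ Finset.range n, (i : ℝ) = n * (n - 1) / 2 := by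
  induction n with
  | zero => simp
  | succ n ih =>
    rw [Finset.sum_range_succ, ih]
    push_cast
    ring

private lemma sum_range_sq_cast (n : ℕ) :
    ∑ i ∈ Finset.range n, (i : ℝ) ^ 2 = n * (n - 1) * (2 * n - 1) / 6 := by
  induction n with
  | zero => simp
  | succ n ih =>
    rw [Finset.sum_range_succ, ih]
    push_cast
    ring

private lemma perm_sq_bound (n : ℕ) (σ τ : Equiv.Perm (Fin n)) :
    ∑ i, (((σ i : ℕ) : ℝ) - ((τ i : ℕ) : ℝ)) ^ 2 ≤ (n : ℝ) * ((n : ℝ) ^ 2 - 1) / 3 := by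
  set π : Equiv.Perm (Fin n) := σ.symm.trans τ with hπ
  have hT : ∑ k : Fin n, ((k : ℕ) : ℝ) = (n : ℝ) * ((n : ℝ) - 1) / 2 := by
    rw [Fin.sum_univ_eq_sum_range (fun k => ((k : ℕ) : ℝ))]
    exact sum_range_cast n
  have hS : ∑ k : Fin n, ((k : ℕ) : ℝ) ^ 2 = (n : ℝ) * ((n : ℝ) - 1) * (2 * (n : ℝ) - 1) / 6 := by
    rw [Fin.sum_univ_eq_sum_range (fun k => ((k : ℕ) : ℝ) ^ 2)]
    exact sum_range_sq_cast n
  -- rearrangement inequality: ∑ k (n-1-k) ≤ ∑ k π(k)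
  have hfg : Antivary (fun k : Fin n => ((k : ℕ) : ℝ))
      (fun k : Fin n => (n : ℝ) - 1 - ((k : ℕ) : ℝ)) := by
    intro i j hij
    dsimp only at hij
    have : ((j : ℕ) : ℝ) < ((i : ℕ) : ℝ) := by linarith
    exact le_of_lt this
  have hrev : ∀ j : Fin n, (n : ℝ) - 1 - ((Fin.rev j : Fin n) : ℕ) = ((j : ℕ) : ℝ) := by
    intro j
    have hj : (j : ℕ) + 1 ≤ n := j.is_lt
    rw [Fin.val_rev, Nat.cast_sub hj]
    push_cast
    ring
  have key : ∑ k : Fin n, ((k : ℕ) : ℝ) * ((n : ℝ) - 1 - ((k : ℕ) : ℝ))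
      ≤ ∑ k : Fin n, ((k : ℕ) : ℝ) * (((π k : Fin n) : ℕ) : ℝ) := by
    have h := hfg.sum_mul_le_sum_mul_comp_perm (σ := π.trans Fin.revPerm)
    refine h.trans_eq (Finset.sum_congr rfl fun k _ => ?_)
    simp only [Equiv.trans_apply, Fin.revPerm_apply]
    rw [hrev (π k)]
  have h1 : ∑ i, ((σ i : ℕ) : ℝ) ^ 2 = ∑ k : Fin n, ((k : ℕ) : ℝ) ^ 2 :=
    Equiv.sum_comp σ (fun k : Fin n => ((k : ℕ) : ℝ) ^ 2)
  have h2 : ∑ i, ((τ i : ℕ) : ℝ) ^ 2 = ∑ k : Fin n, ((k : ℕ) : ℝ) ^ 2 :=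
    Equiv.sum_comp τ (fun k : Fin n => ((k : ℕ) : ℝ) ^ 2)
  have h3 : ∑ i, ((σ i : ℕ) : ℝ) * ((τ i : ℕ) : ℝ)
      = ∑ k : Fin n, ((k : ℕ) : ℝ) * (((π k : Fin n) : ℕ) : ℝ) := by
    rw [← Equiv.sum_comp σ (fun k : Fin n => ((k : ℕ) : ℝ) * (((π k : Fin n) : ℕ) : ℝ))]
    refine Finset.sum_congr rfl fun i _ => ?_
    simp [hπ]
  have expand : ∑ i, (((σ i : ℕ) : ℝ) - ((τ i : ℕ) : ℝ)) ^ 2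
      = (∑ i, ((σ i : ℕ) : ℝ) ^ 2) + (∑ i, ((τ i : ℕ) : ℝ) ^ 2)
        - 2 * ∑ i, ((σ i : ℕ) : ℝ) * ((τ i : ℕ) : ℝ) := by
    rw [Finset.mul_sum, ← Finset.sum_add_distrib, ← Finset.sum_sub_distrib]
    exact Finset.sum_congr rfl fun i _ => by ring
  have hQ : ∑ k : Fin n, ((k : ℕ) : ℝ) * ((n : ℝ) - 1 - ((k : ℕ) : ℝ))
      = ((n : ℝ) - 1) * ((n : ℝ) * ((n : ℝ) - 1) / 2)
        - (n : ℝ) * ((n : ℝ) - 1) * (2 * (n : ℝ) - 1) / 6 := by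
    have hpt : ∀ k : Fin n, ((k : ℕ) : ℝ) * ((n : ℝ) - 1 - ((k : ℕ) : ℝ))
        = ((n : ℝ) - 1) * ((k : ℕ) : ℝ) - ((k : ℕ) : ℝ) ^ 2 := fun k => by ring
    rw [Finset.sum_congr rfl fun k _ => hpt k, Finset.sum_sub_distrib, ← Finset.mul_sum, hT, hS]
  rw [expand, h1, h2, h3, hS]
  nlinarith [key, hQ, hS]

private lemma frac_gap (m mh L k kh : ℕ) (hm : 0 < m) (hmh : 0 < mh)
    (hL : L = Nat.lcm m mh) (hne : (k : ℝ) / m ≠ (kh : ℝ) / mh) :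
    1 / (L : ℝ) ^ 2 ≤ ((k : ℝ) / m - (kh : ℝ) / mh) ^ 2 := by
  have hLpos : 0 < L := by
    rw [hL]
    exact Nat.pos_of_ne_zero (Nat.lcm_ne_zero hm.ne' hmh.ne')
  obtain ⟨a, ha⟩ : m ∣ L := hL ▸ Nat.dvd_lcm_left m mh
  obtain ⟨b, hb⟩ : mh ∣ L := hL ▸ Nat.dvd_lcm_right m mh
  have hm0 : (m : ℝ) ≠ 0 := Nat.cast_ne_zero.mpr hm.ne'
  have hmh0 : (mh : ℝ) ≠ 0 := Nat.cast_ne_zero.mpr hmh.ne'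
  have hL0 : (L : ℝ) ≠ 0 := Nat.cast_ne_zero.mpr hLpos.ne'
  have hLm : (L : ℝ) = (m : ℝ) * (a : ℝ) := by exact_mod_cast congrArg (Nat.cast (R := ℝ)) ha
  have hLmh : (L : ℝ) = (mh : ℝ) * (b : ℝ) := by exact_mod_cast congrArg (Nat.cast (R := ℝ)) hb
  have ha0 : (a : ℝ) ≠ 0 := fun h => hL0 (by rw [hLm, h, mul_zero])
  have hb0 : (b : ℝ) ≠ 0 := fun h => hL0 (by rw [hLmh, h, mul_zero])
  set z : ℤ := (k : ℤ) * a - (kh : ℤ) * b with hz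
  have hdiff : (k : ℝ) / m - (kh : ℝ) / mh = (z : ℝ) / L := by
    have e1 : (k : ℝ) / m = (k : ℝ) * a / L := by
      rw [hLm, mul_div_mul_right _ _ ha0]
    have e2 : (kh : ℝ) / mh = (kh : ℝ) * b / L := by
      rw [hLmh, mul_div_mul_right _ _ hb0]
    rw [e1, e2, div_sub_div_same, hz]
    push_cast
    ring
  have hz0 : z ≠ 0 := by
    intro h
    apply hne
    have : (k : ℝ) / m - (kh : ℝ) / mh = 0 := by rw [hdiff, h]; simp
    linarith [this]
  have hz1 : (1 : ℝ) ≤ (z : ℝ) ^ 2 := by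
    have h1 : (1 : ℤ) ≤ z ^ 2 := by nlinarith [Int.one_le_abs hz0, sq_abs z]
    exact_mod_cast h1
  rw [hdiff, div_pow]
  gcongr

/-- There exists D ≤ n(n²−1)L²/3 bounding the squared rank distance by D times the
squared win-percentage distance, for all schedules and realizations. -/
theorem stmt11 (n m mh : ℕ) (hm : 0 < m) (hmh : 0 < mh) (L : ℕ) (hL : L = Nat.lcm m mh)
    (X Ξ : Type)
    (r : X → Ξ → Equiv.Perm (Fin n)) (rhat : Ξ → Equiv.Perm (Fin n))
    (y : X → Ξ → Fin n → ℝ) (yhat : Ξ → Fin n → ℝ)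
    (hy : ∀ x ξ i, ∃ k : ℕ, k ≤ m ∧ y x ξ i = (k : ℝ) / (m : ℝ))
    (hyhat : ∀ ξ i, ∃ k : ℕ, k ≤ mh ∧ yhat ξ i = (k : ℝ) / (mh : ℝ))
    (hdet : ∀ x ξ, r x ξ ≠ rhat ξ → y x ξ ≠ yhat ξ) :
    ∃ D : ℝ, D ≤ (n : ℝ) * ((n : ℝ) ^ 2 - 1) * (L : ℝ) ^ 2 / 3 ∧
      ∀ x ξ, ∑ i, (((r x ξ i : ℕ) : ℝ) - ((rhat ξ i : ℕ) : ℝ)) ^ 2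
        ≤ D * ∑ i, (y x ξ i - yhat ξ i) ^ 2 := by
  have hLpos : 0 < L := by
    rw [hL]
    exact Nat.pos_of_ne_zero (Nat.lcm_ne_zero hm.ne' hmh.ne')
  have hL0 : (L : ℝ) ≠ 0 := Nat.cast_ne_zero.mpr hLpos.ne'
  set D : ℝ := (n : ℝ) * ((n : ℝ) ^ 2 - 1) * (L : ℝ) ^ 2 / 3 with hD
  have hDnn : 0 ≤ D := by
    rcases Nat.eq_zero_or_pos n with h | h
    · simp [hD, h]
    · have h1 : (1 : ℝ) ≤ (n : ℝ) := by exact_mod_cast h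
      have h2 : (1 : ℝ) ≤ (n : ℝ) ^ 2 := by nlinarith
      have : 0 ≤ (n : ℝ) * ((n : ℝ) ^ 2 - 1) := by nlinarith
      positivity
  refine ⟨D, le_refl _, fun x ξ => ?_⟩
  by_cases h : r x ξ = rhat ξ
  · have hz : ∑ i, (((r x ξ i : ℕ) : ℝ) - ((rhat ξ i : ℕ) : ℝ)) ^ 2 = 0 := by
      rw [h]; simp
    rw [hz]
    exact mul_nonneg hDnn (Finset.sum_nonneg fun i _ => sq_nonneg _)
  · obtain ⟨i0, hi0⟩ := Function.ne_iff.mp (hdet x ξ h)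
    obtain ⟨k, _, hk⟩ := hy x ξ i0
    obtain ⟨kh, _, hkh⟩ := hyhat ξ i0
    have hgap : 1 / (L : ℝ) ^ 2 ≤ (y x ξ i0 - yhat ξ i0) ^ 2 := by
      rw [hk, hkh]
      exact frac_gap m mh L k kh hm hmh hL (by rw [← hk, ← hkh]; exact hi0)
    have hsum : 1 / (L : ℝ) ^ 2 ≤ ∑ i, (y x ξ i - yhat ξ i) ^ 2 :=
      hgap.trans (Finset.single_le_sum (f := fun i => (y x ξ i - yhat ξ i) ^ 2)
        (fun i _ => sq_nonneg _) (Finset.mem_univ i0))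
    calc ∑ i, (((r x ξ i : ℕ) : ℝ) - ((rhat ξ i : ℕ) : ℝ)) ^ 2
        ≤ (n : ℝ) * ((n : ℝ) ^ 2 - 1) / 3 := perm_sq_bound n (r x ξ) (rhat ξ)
      _ = D * (1 / (L : ℝ) ^ 2) := by rw [hD]; field_simp
      _ ≤ D * ∑ i, (y x ξ i - yhat ξ i) ^ 2 := mul_le_mul_of_nonneg_left hsum hDnn
end

section
/- With the notation of the stochastic program PW: for independent Bernoulli game outcomes, E[Σ_{i∈T}(y_i(ξ) − ŷ_i(ξ))²] = Σ_{i∈T}((μ_i − μ̂_i)² + v_i(1 − 2m/m̂) + v̂_i), where μ_i and μ̂_i are the expected win percentages of team i in the shortened and full seasons, v_i = (1/m²)Σ_{g∈G_i^h∪G_i^a} p_g(1−p_g)x_g, and v̂_i = (1/m̂²)Σ_{g∈G_i^h∪G_i^a} p_g(1−p_g). -/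
open MeasureTheory ProbabilityTheory

section Aux

variable {Ω : Type*} [MeasurableSpace Ω] {μ : Measure Ω} [IsProbabilityMeasure μ]

lemma aux_int_bdd (h : Ω → ℝ) (hmeas : Measurable h) (C : ℝ)
    (hb : ∀ᵐ ω ∂μ, |h ω| ≤ C) : Integrable h μ :=
  (integrable_const C).mono' hmeas.aestronglyMeasurable hb

/-- Key second-moment lemma: E[(D + ∑ c g (W g − p g))²] = D² + ∑ c g² p g (1−p g). -/
lemma aux_key {G : Type*} [DecidableEq G]
    (W : G → Ω → ℝ) (hWmeas : ∀ g, Measurable (W g)) (p : G → ℝ)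
    (hW01 : ∀ g, ∀ᵐ ω ∂μ, W g ω = 0 ∨ W g ω = 1)
    (hWmean : ∀ g, ∫ ω, W g ω ∂μ = p g)
    (hindep : iIndepFun W μ)
    (S : Finset G) (c : G → ℝ) (D : ℝ) :
    ∫ ω, (D + ∑ g ∈ S, c g * (W g ω - p g)) ^ 2 ∂μ
      = D ^ 2 + ∑ g ∈ S, (c g) ^ 2 * (p g * (1 - p g)) := by
  have hWint : ∀ g, Integrable (W g) μ := by
    intro g
    refine aux_int_bdd _ (hWmeas g) 1 ?_
    filter_upwards [hW01 g] with ω h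
    rcases h with h | h <;> simp [h]
  have hfint : ∀ g, Integrable (fun ω => W g ω - p g) μ :=
    fun g => (hWint g).sub (integrable_const _)
  have hfmean : ∀ g, ∫ ω, (W g ω - p g) ∂μ = 0 := by
    intro g
    rw [integral_sub (hWint g) (integrable_const _), hWmean g, integral_const]
    simp
  have hprodint : ∀ g g', Integrable (fun ω => (W g ω - p g) * (W g' ω - p g')) μ := by
    intro g g'
    refine aux_int_bdd _ (((hWmeas g).sub measurable_const).mul
      ((hWmeas g').sub measurable_const)) ((1 + |p g|) * (1 + |p g'|)) ?_
    filter_upwards [hW01 g, hW01 g'] with ω h h'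
    have h1 : |W g ω - p g| ≤ 1 + |p g| := by
      rcases h with h | h <;> rw [h] <;>
        [simp; skip] <;>
        calc |(1 : ℝ) - p g| ≤ |(1:ℝ)| + |p g| := abs_sub _ _
        _ = 1 + |p g| := by norm_num
    have h2 : |W g' ω - p g'| ≤ 1 + |p g'| := by
      rcases h' with h' | h' <;> rw [h'] <;>
        [simp; skip] <;>
        calc |(1 : ℝ) - p g'| ≤ |(1:ℝ)| + |p g'| := abs_sub _ _
        _ = 1 + |p g'| := by norm_num
    rw [abs_mul]
    exact mul_le_mul h1 h2 (abs_nonneg _) (by positivity)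
  have hcov : ∀ g g', g ≠ g' → ∫ ω, (W g ω - p g) * (W g' ω - p g') ∂μ = 0 := by
    intro g g' hne
    have hWind : IndepFun (W g) (W g') μ := hindep.indepFun hne
    have hfind : IndepFun (fun ω => W g ω - p g) (fun ω => W g' ω - p g') μ :=
      hWind.comp (measurable_id.sub measurable_const) (measurable_id.sub measurable_const)
    have := hfind.integral_mul_eq_mul_integral (hfint g).aestronglyMeasurable (hfint g').aestronglyMeasurable
    calc ∫ ω, (W g ω - p g) * (W g' ω - p g') ∂μ
        = ∫ ω, ((fun ω => W g ω - p g) * fun ω => W g' ω - p g') ω ∂μ := rfl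
      _ = (∫ ω, (W g ω - p g) ∂μ) * ∫ ω, (W g' ω - p g') ∂μ := this
      _ = 0 := by rw [hfmean g, hfmean g']; ring
  have hvar : ∀ g, ∫ ω, (W g ω - p g) * (W g ω - p g) ∂μ = p g * (1 - p g) := by
    intro g
    have hae : (fun ω => (W g ω - p g) * (W g ω - p g))
        =ᵐ[μ] fun ω => (1 - 2 * p g) * W g ω + p g ^ 2 := by
      filter_upwards [hW01 g] with ω h
      rcases h with h | h <;> rw [h] <;> ring
    rw [integral_congr_ae hae,
      integral_add ((hWint g).const_mul _) (integrable_const _),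
      integral_const_mul, hWmean g, integral_const]
    simp only [measure_univ, ENNReal.toReal_one, probReal_univ, smul_eq_mul, one_mul]
    ring
  -- expand the square pointwise
  have hexpand : (fun ω => (D + ∑ g ∈ S, c g * (W g ω - p g)) ^ 2)
      = fun ω => D ^ 2 + (2 * D) * (∑ g ∈ S, c g * (W g ω - p g))
        + ∑ g ∈ S, ∑ g' ∈ S, (c g * c g') * ((W g ω - p g) * (W g' ω - p g')) := by
    funext ω
    have hsq : (∑ g ∈ S, c g * (W g ω - p g)) * (∑ g' ∈ S, c g' * (W g' ω - p g'))
        = ∑ g ∈ S, ∑ g' ∈ S, (c g * c g') * ((W g ω - p g) * (W g' ω - p g')) := by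
      rw [Finset.sum_mul_sum]
      exact Finset.sum_congr rfl fun g _ => Finset.sum_congr rfl fun g' _ => by ring
    rw [← hsq]; ring
  have hsum_int : Integrable (fun ω => ∑ g ∈ S, c g * (W g ω - p g)) μ :=
    integrable_finset_sum _ fun g _ => (hfint g).const_mul _
  have hsq_int : Integrable (fun ω => ∑ g ∈ S, ∑ g' ∈ S,
      (c g * c g') * ((W g ω - p g) * (W g' ω - p g'))) μ :=
    integrable_finset_sum _ fun g _ =>
      integrable_finset_sum _ fun g' _ => (hprodint g g').const_mul _
  have hB : Integrable (fun ω => 2 * D * ∑ g ∈ S, c g * (W g ω - p g)) μ :=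
    hsum_int.const_mul _
  have hA : Integrable (fun ω => D ^ 2 + 2 * D * ∑ g ∈ S, c g * (W g ω - p g)) μ :=
    (integrable_const _).add hB
  rw [hexpand, integral_add hA hsq_int,
    integral_add (integrable_const _) hB,
    integral_const_mul, integral_finset_sum _ fun g _ => (hfint g).const_mul _,
    integral_finset_sum _ (fun g _ => integrable_finset_sum _ fun g' _ =>
      (hprodint g g').const_mul _)]
  have hzero : ∑ g ∈ S, ∫ ω, c g * (W g ω - p g) ∂μ = 0 := by
    refine Finset.sum_eq_zero fun g _ => ?_
    rw [integral_const_mul, hfmean g, mul_zero]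
  have hdiag : ∀ g ∈ S, (∫ ω, ∑ g' ∈ S,
      (c g * c g') * ((W g ω - p g) * (W g' ω - p g')) ∂μ)
      = (c g) ^ 2 * (p g * (1 - p g)) := by
    intro g hg
    rw [integral_finset_sum _ fun g' _ => (hprodint g g').const_mul _]
    rw [Finset.sum_eq_single_of_mem g hg]
    · rw [integral_const_mul, hvar g]; ring
    · intro g' _ hne
      rw [integral_const_mul, hcov g g' (Ne.symm hne), mul_zero]
  rw [Finset.sum_congr rfl hdiag, hzero, integral_const]
  simp

/-- Integrability of the squared expression. -/
lemma aux_int_sq {G : Type*} [DecidableEq G]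
    (W : G → Ω → ℝ) (hWmeas : ∀ g, Measurable (W g)) (p : G → ℝ)
    (hW01 : ∀ g, ∀ᵐ ω ∂μ, W g ω = 0 ∨ W g ω = 1)
    (S : Finset G) (c : G → ℝ) (D : ℝ) :
    Integrable (fun ω => (D + ∑ g ∈ S, c g * (W g ω - p g)) ^ 2) μ := by
  refine aux_int_bdd _ ?_ ((|D| + ∑ g ∈ S, |c g| * (1 + |p g|)) ^ 2) ?_
  · exact ((measurable_const.add (Finset.measurable_sum _ fun g _ =>
      ((hWmeas g).sub measurable_const).const_mul _)).pow measurable_const)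
  · have hall : ∀ᵐ ω ∂μ, ∀ g ∈ S, W g ω = 0 ∨ W g ω = 1 :=
      (ae_ball_iff S.countable_toSet).2 fun g _ => hW01 g
    filter_upwards [hall] with ω h
    have hb : |D + ∑ g ∈ S, c g * (W g ω - p g)| ≤ |D| + ∑ g ∈ S, |c g| * (1 + |p g|) := by
      calc |D + ∑ g ∈ S, c g * (W g ω - p g)|
          ≤ |D| + |∑ g ∈ S, c g * (W g ω - p g)| := abs_add_le _ _
        _ ≤ |D| + ∑ g ∈ S, |c g * (W g ω - p g)| :=
            add_le_add_right (Finset.abs_sum_le_sum_abs _ _) _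
        _ ≤ |D| + ∑ g ∈ S, |c g| * (1 + |p g|) := by
            refine add_le_add_right (Finset.sum_le_sum fun g hg => ?_) _
            rw [abs_mul]
            refine mul_le_mul_of_nonneg_left ?_ (abs_nonneg _)
            rcases h g hg with h' | h' <;> rw [h']
            · simp only [zero_sub, abs_neg]
              linarith [abs_nonneg (p g)]
            · calc |(1:ℝ) - p g| ≤ |(1:ℝ)| + |p g| := abs_sub _ _
                _ = 1 + |p g| := by norm_num
    rw [abs_of_nonneg (sq_nonneg _), ← sq_abs]
    exact pow_le_pow_left₀ (abs_nonneg _) hb 2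

end Aux

/-- Deterministic equivalent of the PW objective:
E[Σᵢ (yᵢ − ŷᵢ)²] = Σᵢ ((μᵢ − μ̂ᵢ)² + vᵢ(1 − 2m/m̂) + v̂ᵢ). -/
theorem stmt14 {Ω : Type*} [MeasurableSpace Ω] (μ : Measure Ω) [IsProbabilityMeasure μ]
    {G T : Type*} [Fintype G] [DecidableEq G] [Fintype T]
    (W : G → Ω → ℝ) (hWmeas : ∀ g, Measurable (W g))
    (p : G → ℝ)
    (hW01 : ∀ g, ∀ᵐ ω ∂μ, W g ω = 0 ∨ W g ω = 1)
    (hWmean : ∀ g, ∫ ω, W g ω ∂μ = p g)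
    (hindep : iIndepFun W μ)
    (Gh Ga : T → Finset G) (hdisj : ∀ i, Disjoint (Gh i) (Ga i))
    (x : G → ℝ) (hx : ∀ g, x g = 0 ∨ x g = 1)
    (y0 : T → ℝ) (m mh : ℕ) (hm : 0 < m) (hmh : 0 < mh) :
    ∫ ω, ∑ i : T,
        ((1 / (m : ℝ)) * (y0 i + ∑ g ∈ Gh i, W g ω * x g + ∑ g ∈ Ga i, (1 - W g ω) * x g)
          - (1 / (mh : ℝ)) * (y0 i + ∑ g ∈ Gh i, W g ω + ∑ g ∈ Ga i, (1 - W g ω))) ^ 2 ∂μ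
      = ∑ i : T,
          (((1 / (m : ℝ)) * (y0 i + ∑ g ∈ Gh i, p g * x g + ∑ g ∈ Ga i, (1 - p g) * x g)
              - (1 / (mh : ℝ)) * (y0 i + ∑ g ∈ Gh i, p g + ∑ g ∈ Ga i, (1 - p g))) ^ 2
            + ((1 / (m : ℝ) ^ 2) * ∑ g ∈ Gh i ∪ Ga i, p g * (1 - p g) * x g)
                * (1 - 2 * (m : ℝ) / (mh : ℝ))
            + (1 / (mh : ℝ) ^ 2) * ∑ g ∈ Gh i ∪ Ga i, p g * (1 - p g)) := by
  have hm0 : (m : ℝ) ≠ 0 := Nat.cast_ne_zero.mpr hm.ne'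
  have hmh0 : (mh : ℝ) ≠ 0 := Nat.cast_ne_zero.mpr hmh.ne'
  set c : T → G → ℝ := fun i g =>
    if g ∈ Gh i then x g / (m : ℝ) - 1 / (mh : ℝ)
    else -(x g / (m : ℝ) - 1 / (mh : ℝ)) with hc_def
  set D : T → ℝ := fun i =>
    (1 / (m : ℝ)) * (y0 i + ∑ g ∈ Gh i, p g * x g + ∑ g ∈ Ga i, (1 - p g) * x g)
      - (1 / (mh : ℝ)) * (y0 i + ∑ g ∈ Gh i, p g + ∑ g ∈ Ga i, (1 - p g)) with hD_def
  -- pointwise rewriting of the integrand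
  have hpt : ∀ i ω,
      ((1 / (m : ℝ)) * (y0 i + ∑ g ∈ Gh i, W g ω * x g + ∑ g ∈ Ga i, (1 - W g ω) * x g)
        - (1 / (mh : ℝ)) * (y0 i + ∑ g ∈ Gh i, W g ω + ∑ g ∈ Ga i, (1 - W g ω)))
      = D i + ∑ g ∈ Gh i ∪ Ga i, c i g * (W g ω - p g) := by
    intro i ω
    rw [Finset.sum_union (hdisj i)]
    have h1 : ∑ g ∈ Gh i, c i g * (W g ω - p g)
        = (1 / (m : ℝ)) * (∑ g ∈ Gh i, W g ω * x g)
          - (1 / (m : ℝ)) * (∑ g ∈ Gh i, p g * x g)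
          - (1 / (mh : ℝ)) * (∑ g ∈ Gh i, W g ω)
          + (1 / (mh : ℝ)) * (∑ g ∈ Gh i, p g) := by
      rw [Finset.mul_sum, Finset.mul_sum, Finset.mul_sum, Finset.mul_sum,
        ← Finset.sum_sub_distrib, ← Finset.sum_sub_distrib, ← Finset.sum_add_distrib]
      refine Finset.sum_congr rfl fun g hg => ?_
      simp only [hc_def, if_pos hg]
      field_simp
      ring
    have h2 : ∑ g ∈ Ga i, c i g * (W g ω - p g)
        = (1 / (m : ℝ)) * (∑ g ∈ Ga i, (1 - W g ω) * x g)
          - (1 / (m : ℝ)) * (∑ g ∈ Ga i, (1 - p g) * x g)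
          - (1 / (mh : ℝ)) * (∑ g ∈ Ga i, (1 - W g ω))
          + (1 / (mh : ℝ)) * (∑ g ∈ Ga i, (1 - p g)) := by
      rw [Finset.mul_sum, Finset.mul_sum, Finset.mul_sum, Finset.mul_sum,
        ← Finset.sum_sub_distrib, ← Finset.sum_sub_distrib, ← Finset.sum_add_distrib]
      refine Finset.sum_congr rfl fun g hg => ?_
      have hgh : g ∉ Gh i := Finset.disjoint_right.mp (hdisj i) hg
      simp only [hc_def, if_neg hgh]
      field_simp
      ring
    rw [h1, h2, hD_def]
    ring
  -- rewrite the integrand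
  have hfun : (fun ω => ∑ i : T,
      ((1 / (m : ℝ)) * (y0 i + ∑ g ∈ Gh i, W g ω * x g + ∑ g ∈ Ga i, (1 - W g ω) * x g)
        - (1 / (mh : ℝ)) * (y0 i + ∑ g ∈ Gh i, W g ω + ∑ g ∈ Ga i, (1 - W g ω))) ^ 2)
      = fun ω => ∑ i : T, (D i + ∑ g ∈ Gh i ∪ Ga i, c i g * (W g ω - p g)) ^ 2 := by
    funext ω
    exact Finset.sum_congr rfl fun i _ => by rw [hpt i ω]
  rw [hfun, integral_finset_sum _ fun i _ => aux_int_sq W hWmeas p hW01 _ _ _]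
  refine Finset.sum_congr rfl fun i _ => ?_
  rw [aux_key W hWmeas p hW01 hWmean hindep (Gh i ∪ Ga i) (c i) (D i)]
  have hvarsum : ∑ g ∈ Gh i ∪ Ga i, (c i g) ^ 2 * (p g * (1 - p g))
      = ((1 / (m : ℝ) ^ 2) * ∑ g ∈ Gh i ∪ Ga i, p g * (1 - p g) * x g)
          * (1 - 2 * (m : ℝ) / (mh : ℝ))
        + (1 / (mh : ℝ) ^ 2) * ∑ g ∈ Gh i ∪ Ga i, p g * (1 - p g) := by
    rw [Finset.mul_sum, Finset.mul_sum, Finset.sum_mul, ← Finset.sum_add_distrib]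
    refine Finset.sum_congr rfl fun g _ => ?_
    have hcsq : (c i g) ^ 2 = (x g / (m : ℝ) - 1 / (mh : ℝ)) ^ 2 := by
      simp only [hc_def]; split <;> ring
    rw [hcsq]
    rcases hx g with h | h <;> rw [h] <;> field_simp <;> ring
  rw [hvarsum, hD_def]
  ring
end

section
/- Minimizing the PW-DQIP objective is equivalent (up to an additive constant) to minimizing Σ_{i∈T}(μ_i − μ̂_i)² + 2(1 − 2m/m̂)(1/m²) Σ_{g∈G} p_g(1−p_g) x_g over feasible schedules x; in particular, when m > m̂/2 the coefficient of each variance term p_g(1−p_g)x_g is negative, so for fixed means the objective is decreased by selecting games with larger outcome variance. -/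
lemma part_sum {T G : Type*} [Fintype T] [Fintype G] [DecidableEq G]
    (S : T → Finset G) (h : ∀ g : G, ∃! i : T, g ∈ S i) (f : G → ℝ) :
    ∑ i, ∑ g ∈ S i, f g = ∑ g, f g := by
  have : ∀ i : T, ∑ g ∈ S i, f g = ∑ g, if g ∈ S i then f g else 0 := by
    intro i; rw [Finset.sum_ite_mem, Finset.univ_inter]
  simp_rw [this]
  rw [Finset.sum_comm]
  refine Finset.sum_congr rfl fun g _ => ?_
  obtain ⟨i, hi, huniq⟩ := h g
  rw [Finset.sum_eq_single i]
  · simp [hi]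
  · intro j _ hj
    exact if_neg (fun hg => hj (huniq j hg))
  · simp

/-- The PW-DQIP objective equals, up to an additive constant, the reduced objective
Σᵢ(μᵢ−μ̂ᵢ)² + 2(1−2m/m̂)(1/m²)Σ_g p_g(1−p_g)x_g; when m > m̂/2 the variance coefficient
is negative, so for fixed means the objective decreases in the selected variance. -/
theorem stmt19 {T G : Type*} [Fintype T] [Fintype G] [DecidableEq G]
    (Gh Ga : T → Finset G)
    (hdisj : ∀ i, Disjoint (Gh i) (Ga i))
    (hparth : ∀ g : G, ∃! i : T, g ∈ Gh i)
    (hparta : ∀ g : G, ∃! i : T, g ∈ Ga i)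
    (p : G → ℝ) (y0 : T → ℝ) (m mh : ℝ) (hm : 0 < m) (hmh : 0 < mh) (hmm : m ≤ mh)
    (μ : (G → ℝ) → T → ℝ)
    (hμ : ∀ x i, μ x i
      = (1 / m) * (y0 i + ∑ g ∈ Gh i, p g * x g + ∑ g ∈ Ga i, (1 - p g) * x g))
    (μhat : T → ℝ)
    (v : (G → ℝ) → T → ℝ)
    (hv : ∀ x i, v x i = (1 / m ^ 2) * ∑ g ∈ Gh i ∪ Ga i, p g * (1 - p g) * x g)
    (vhat : T → ℝ)
    (hvhat : ∀ i, vhat i = (1 / mh ^ 2) * ∑ g ∈ Gh i ∪ Ga i, p g * (1 - p g))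
    (obj : (G → ℝ) → ℝ)
    (hobj : ∀ x, obj x
      = ∑ i, ((μ x i - μhat i) ^ 2 + v x i * (1 - 2 * m / mh) + vhat i)) :
    (∃ C : ℝ, ∀ x : G → ℝ,
      obj x = (∑ i, (μ x i - μhat i) ^ 2
        + 2 * (1 - 2 * m / mh) * (1 / m ^ 2) * ∑ g, p g * (1 - p g) * x g) + C)
    ∧ (mh / 2 < m → 2 * (1 - 2 * m / mh) * (1 / m ^ 2) < 0)
    ∧ (mh / 2 < m → ∀ x x' : G → ℝ, (∀ i, μ x i = μ x' i) →
        (∑ g, p g * (1 - p g) * x g) < (∑ g, p g * (1 - p g) * x' g) →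
        obj x' < obj x) := by
  have hvsum : ∀ x : G → ℝ,
      ∑ i, v x i = (2 / m ^ 2) * ∑ g, p g * (1 - p g) * x g := by
    intro x
    have : ∀ i, v x i = (1 / m ^ 2) * ((∑ g ∈ Gh i, p g * (1 - p g) * x g)
        + ∑ g ∈ Ga i, p g * (1 - p g) * x g) := by
      intro i
      rw [hv, Finset.sum_union (hdisj i)]
    simp_rw [this]
    rw [← Finset.mul_sum, Finset.sum_add_distrib,
      part_sum Gh hparth (fun g => p g * (1 - p g) * x g),
      part_sum Ga hparta (fun g => p g * (1 - p g) * x g)]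
    ring
  have hobj' : ∀ x : G → ℝ,
      obj x = (∑ i, (μ x i - μhat i) ^ 2
        + 2 * (1 - 2 * m / mh) * (1 / m ^ 2) * ∑ g, p g * (1 - p g) * x g)
        + ∑ i, vhat i := by
    intro x
    rw [hobj, Finset.sum_add_distrib, Finset.sum_add_distrib, ← Finset.sum_mul, hvsum]
    ring
  have hcoef : mh / 2 < m → 2 * (1 - 2 * m / mh) * (1 / m ^ 2) < 0 := by
    intro h
    have h1 : 1 - 2 * m / mh < 0 := by
      rw [sub_neg]
      rw [lt_div_iff₀ hmh]
      linarith
    have h2 : 0 < (1 : ℝ) / m ^ 2 := by positivity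
    nlinarith
  refine ⟨⟨∑ i, vhat i, hobj'⟩, hcoef, ?_⟩
  intro h x x' hmeq hlt
  rw [hobj' x, hobj' x']
  have hmu : ∑ i, (μ x i - μhat i) ^ 2 = ∑ i, (μ x' i - μhat i) ^ 2 := by
    exact Finset.sum_congr rfl fun i _ => by rw [hmeq i]
  have := mul_lt_mul_of_neg_left hlt (hcoef h)
  linarith
end
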